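/- Assume the sign-coherence property holds for the pattern, and let D be a skew-symmetrizer of B⁰ (such a D is then a skew-symmetrizer of every B_t). Then for every vertex t: det C_t = det G_t and this common determinant is 1 or −1 (unimodularity), and the second duality D⁻¹ G_tᵀ D C_t = I holds. -/
import Mathlib


open Matrix

namespace ClusterPattern

variable {ι : Type*} [Fintype ι] [DecidableEq ι]

/-- Entrywise positive part `[A]₊`. -/
def posPart (A : Matrix ι ι ℤ) : Matrix ι ι ℤ := Matrix.of fun i j => max (A i j) 0

/-- `A^{•k}`: all columns other than the `k`-th set to `0`. -/
def colSel (k : ι) (A : Matrix ι ι ℤ) : Matrix ι ι ℤ :=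
  Matrix.of fun i j => if j = k then A i j else 0

/-- `A^{k•}`: all rows other than the `k`-th set to `0`. -/
def rowSel (k : ι) (A : Matrix ι ι ℤ) : Matrix ι ι ℤ :=
  Matrix.of fun i j => if i = k then A i j else 0

/-- `J_k`: identity with `k`-th diagonal entry replaced by `-1`. -/
def Jmat (k : ι) : Matrix ι ι ℤ := Matrix.diagonal fun i => if i = k then -1 else 1

/-- A skew-symmetrizable integer matrix. -/
def IsSkewSymmetrizable (B : Matrix ι ι ℤ) : Prop :=
  ∃ D : ι → ℚ, (∀ i, 0 < D i) ∧ ∀ i j, D i * (B i j : ℚ) = -(D j * (B j i : ℚ))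

/-- Matrix mutation `μ_k`. -/
def mutate (k : ι) (B : Matrix ι ι ℤ) : Matrix ι ι ℤ :=
  Matrix.of fun i j => if i = k ∨ j = k then -B i j
    else B i j + B i k * max (B k j) 0 + max (-B i k) 0 * B k j

/-- The exchange matrix `B_t` at the vertex reached from `B0` along the path `w`. -/
def Bmat (B0 : Matrix ι ι ℤ) (w : List ι) : Matrix ι ι ℤ :=
  w.foldl (fun B k => mutate k B) B0

/-- One mutation step of a `C`-matrix. -/
def Cstep (B C : Matrix ι ι ℤ) (k : ι) : Matrix ι ι ℤ :=
  C * Jmat k + C * rowSel k (posPart B) + colSel k (posPart (-C)) * B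

/-- One mutation step of a `G`-matrix. -/
def Gstep (B0 B C G : Matrix ι ι ℤ) (k : ι) : Matrix ι ι ℤ :=
  G * Jmat k + G * colSel k (posPart (-B)) - B0 * colSel k (posPart (-C))

/-- The `C`-matrix `C_t` at the vertex reached from the initial matrix `B0` along `w`. -/
def Cmat (B0 : Matrix ι ι ℤ) (w : List ι) : Matrix ι ι ℤ :=
  (w.foldl (fun p k => (mutate k p.1, Cstep p.1 p.2 k))
    ((B0, 1) : Matrix ι ι ℤ × Matrix ι ι ℤ)).2

/-- The `G`-matrix `G_t` at the vertex reached from the initial matrix `B0` along `w`. -/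
def Gmat (B0 : Matrix ι ι ℤ) (w : List ι) : Matrix ι ι ℤ :=
  (w.foldl (fun p k => (mutate k p.1, Cstep p.1 p.2.1 k, Gstep B0 p.1 p.2.1 p.2.2 k))
    ((B0, 1, 1) : Matrix ι ι ℤ × Matrix ι ι ℤ × Matrix ι ι ℤ)).2.2

/-- A nonzero integer vector with all entries nonnegative. -/
def IsPositiveVec (v : ι → ℤ) : Prop := v ≠ 0 ∧ ∀ i, 0 ≤ v i

/-- A nonzero integer vector with all entries nonpositive. -/
def IsNegativeVec (v : ι → ℤ) : Prop := v ≠ 0 ∧ ∀ i, v i ≤ 0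

/-- Every column is a positive or a negative vector. -/
def ColSignCoherent (M : Matrix ι ι ℤ) : Prop :=
  ∀ j, IsPositiveVec (fun i => M i j) ∨ IsNegativeVec (fun i => M i j)

/-- Every row is a positive or a negative vector. -/
def RowSignCoherent (M : Matrix ι ι ℤ) : Prop :=
  ∀ i, IsPositiveVec (fun j => M i j) ∨ IsNegativeVec (fun j => M i j)

lemma colSel_mul_apply (k : ι) (M A : Matrix ι ι ℤ) (i j : ι) :
    (colSel k M * A) i j = M i k * A k j := by
  simp [colSel, Matrix.mul_apply, ite_mul, Finset.sum_ite_eq']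

lemma mul_rowSel_apply (k : ι) (A M : Matrix ι ι ℤ) (i j : ι) :
    (A * rowSel k M) i j = A i k * M k j := by
  simp [rowSel, Matrix.mul_apply, mul_ite, Finset.sum_ite_eq]

lemma mul_colSel (k : ι) (A M : Matrix ι ι ℤ) :
    A * colSel k M = colSel k (A * M) := by
  ext i j
  simp [colSel, Matrix.mul_apply, mul_ite, apply_ite]
  by_cases h : j = k <;> simp [h]

lemma mul_Jmat_apply (k : ι) (A : Matrix ι ι ℤ) (i j : ι) :
    (A * Jmat k) i j = A i j * (if j = k then -1 else 1) := by
  simp [Jmat, Matrix.mul_diagonal]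

lemma Jmat_mul_apply (k : ι) (A : Matrix ι ι ℤ) (i j : ι) :
    (Jmat k * A) i j = (if i = k then -1 else 1) * A i j := by
  simp [Jmat, Matrix.diagonal_mul]


def IsSkew (D : ι → ℚ) (B : Matrix ι ι ℤ) : Prop :=
  ∀ i j, D i * (B i j : ℚ) = -(D j * (B j i : ℚ))

lemma IsSkew.diag_zero {D : ι → ℚ} (hD : ∀ i, 0 < D i) {B : Matrix ι ι ℤ}
    (h : IsSkew D B) (k : ι) : B k k = 0 := by
  have h1 := h k k
  have hx : D k * (B k k : ℚ) = 0 := by linarith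
  have h2 : (B k k : ℚ) = 0 := by
    rcases mul_eq_zero.mp hx with h | h
    · exact absurd h (hD k).ne'
    · exact h
  exact_mod_cast h2

lemma IsSkew.neg {D : ι → ℚ} {B : Matrix ι ι ℤ} (h : IsSkew D B) : IsSkew D (-B) := by
  intro i j
  have := h i j
  simp only [Matrix.neg_apply]
  push_cast
  linarith

lemma IsSkew.mutate {D : ι → ℚ} (hD : ∀ i, 0 < D i) {B : Matrix ι ι ℤ}
    (h : IsSkew D B) (k : ι) : IsSkew D (mutate k B) := by
  intro i j
  by_cases hik : i = k
  · subst hik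
    have h1 := h i j
    simp only [ClusterPattern.mutate, Matrix.of_apply, true_or, eq_self_iff_true, if_true,
      or_true]
    by_cases hjk : j = i <;> simp [hjk] <;> push_cast <;> linarith [h i i, h j i]
  · by_cases hjk : j = k
    · subst hjk
      have h1 := h i j
      simp only [ClusterPattern.mutate, Matrix.of_apply, or_true, true_or, if_true]
      push_cast
      linarith
    · simp only [ClusterPattern.mutate, Matrix.of_apply, hik, hjk, or_self, if_false]
      have h1 := h i j
      have h2 := h i k
      have h3 := h k j
      have hDi := hD i
      have hDj := hD j
      have hDk := hD k
      push_cast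
      rcases le_total 0 ((B i k : ℚ)) with hx | hx <;> rcases le_total 0 ((B k j : ℚ)) with hy | hy
      · have hki : (B k i : ℚ) ≤ 0 := by nlinarith
        have hjkq : (B j k : ℚ) ≤ 0 := by nlinarith
        rw [max_eq_left hy, max_eq_right (by linarith : -(B i k:ℚ) ≤ 0),
          max_eq_right hki, max_eq_left (by linarith : (0:ℚ) ≤ -(B j k:ℚ))]
        linear_combination h1 + (B k j : ℚ) * h2 - (B k i : ℚ) * h3
      · have hki : (B k i : ℚ) ≤ 0 := by nlinarith
        have hjkq : (0:ℚ) ≤ (B j k : ℚ) := by nlinarith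
        rw [max_eq_right hy, max_eq_right (by linarith : -(B i k:ℚ) ≤ 0),
          max_eq_right hki, max_eq_right (by linarith : -(B j k:ℚ) ≤ 0)]
        linear_combination h1
      · have hki : (0:ℚ) ≤ (B k i : ℚ) := by nlinarith
        have hjkq : (B j k : ℚ) ≤ 0 := by nlinarith
        rw [max_eq_left hy, max_eq_left (by linarith : (0:ℚ) ≤ -(B i k:ℚ)),
          max_eq_left hki, max_eq_left (by linarith : (0:ℚ) ≤ -(B j k:ℚ))]
        linear_combination h1
      · have hki : (0:ℚ) ≤ (B k i : ℚ) := by nlinarith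
        have hjkq : (0:ℚ) ≤ (B j k : ℚ) := by nlinarith
        rw [max_eq_right hy, max_eq_left (by linarith : (0:ℚ) ≤ -(B i k:ℚ)),
          max_eq_left hki, max_eq_right (by linarith : -(B j k:ℚ) ≤ 0)]
        linear_combination h1 - (B k j : ℚ) * h2 + (B k i : ℚ) * h3


/-- positive column case -/
lemma Cstep_pos {k : ι} {C : Matrix ι ι ℤ} (h : ∀ i, 0 ≤ C i k) (B : Matrix ι ι ℤ) :
    Cstep B C k = C * (Jmat k + rowSel k (posPart B)) := by
  have hz : colSel k (posPart (-C)) = 0 := by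
    ext i j
    simp only [colSel, posPart, Matrix.of_apply, Matrix.neg_apply, Matrix.zero_apply]
    by_cases hj : j = k
    · subst hj; simp [max_eq_right (neg_nonpos.mpr (h i))]
    · simp [hj]
  rw [Cstep, hz, Matrix.zero_mul, add_zero, Matrix.mul_add]

lemma Gstep_pos {k : ι} {C : Matrix ι ι ℤ} (h : ∀ i, 0 ≤ C i k) (B0 B G : Matrix ι ι ℤ) :
    Gstep B0 B C G k = G * (Jmat k + colSel k (posPart (-B))) := by
  have hz : colSel k (posPart (-C)) = 0 := by
    ext i j
    simp only [colSel, posPart, Matrix.of_apply, Matrix.neg_apply, Matrix.zero_apply]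
    by_cases hj : j = k
    · subst hj; simp [max_eq_right (neg_nonpos.mpr (h i))]
    · simp [hj]
  rw [Gstep, hz, Matrix.mul_zero, sub_zero, Matrix.mul_add]

/-- negative column case -/
lemma Cstep_neg {k : ι} {C : Matrix ι ι ℤ} (h : ∀ i, C i k ≤ 0) (B : Matrix ι ι ℤ) :
    Cstep B C k = C * (Jmat k + rowSel k (posPart (-B))) := by
  have hz : colSel k (posPart (-C)) = -(colSel k C) := by
    ext i j
    simp only [colSel, posPart, Matrix.of_apply, Matrix.neg_apply]
    by_cases hj : j = k
    · subst hj; simp [max_eq_left (neg_nonneg.mpr (h i))]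
    · simp [hj]
  rw [Cstep, hz]
  ext i j
  simp only [Matrix.add_apply, Matrix.mul_add, Matrix.neg_mul, Matrix.neg_apply,
    mul_rowSel_apply, colSel_mul_apply, mul_Jmat_apply]
  have hmx : max (-B k j) 0 = max (B k j) 0 - B k j := by omega
  simp only [posPart, Matrix.of_apply, Matrix.neg_apply, hmx]
  ring

lemma Gstep_neg {k : ι} {B0 B C G : Matrix ι ι ℤ} (h : ∀ i, C i k ≤ 0)
    (hGB : G * B = B0 * C) :
    Gstep B0 B C G k = G * (Jmat k + colSel k (posPart B)) := by
  have hz : colSel k (posPart (-C)) = -(colSel k C) := by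
    ext i j
    simp only [colSel, posPart, Matrix.of_apply, Matrix.neg_apply]
    by_cases hj : j = k
    · subst hj; simp [max_eq_left (neg_nonneg.mpr (h i))]
    · simp [hj]
  have hBC : B0 * colSel k C = G * colSel k B := by
    rw [mul_colSel, mul_colSel, ← hGB]
  rw [Gstep, hz, Matrix.mul_neg, sub_neg_eq_add, hBC, Matrix.mul_add, add_assoc,
    ← Matrix.mul_add]
  congr 2
  ext i j
  simp only [colSel, posPart, Matrix.add_apply, Matrix.of_apply, Matrix.neg_apply]
  by_cases hj : j = k
  · simp only [hj, if_true]; omega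
  · simp [hj]


lemma EB_pos {k : ι} {B : Matrix ι ι ℤ} (hkk : B k k = 0) :
    (Jmat k + colSel k (posPart (-B))) * mutate k B
      = B * (Jmat k + rowSel k (posPart B)) := by
  ext i j
  rw [Matrix.add_mul, Matrix.mul_add]
  simp only [Matrix.add_apply, Jmat_mul_apply, colSel_mul_apply, mul_Jmat_apply,
    mul_rowSel_apply, posPart, mutate, Matrix.of_apply, Matrix.neg_apply]
  by_cases hi : i = k <;> by_cases hj : j = k <;>
    simp only [hi, hj, if_true, if_false, eq_self_iff_true, or_true, true_or, or_self,
      or_false, false_or, hkk] <;>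
  · have hmx : ∀ x : ℤ, max (-x) 0 = max x 0 - x := fun x => by omega
    simp only [hmx, max_self]
    ring

lemma EB_neg {k : ι} {B : Matrix ι ι ℤ} (hkk : B k k = 0) :
    (Jmat k + colSel k (posPart B)) * mutate k B
      = B * (Jmat k + rowSel k (posPart (-B))) := by
  ext i j
  rw [Matrix.add_mul, Matrix.mul_add]
  simp only [Matrix.add_apply, Jmat_mul_apply, colSel_mul_apply, mul_Jmat_apply,
    mul_rowSel_apply, posPart, mutate, Matrix.of_apply, Matrix.neg_apply]
  by_cases hi : i = k <;> by_cases hj : j = k <;>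
    simp only [hi, hj, if_true, if_false, eq_self_iff_true, or_true, true_or, or_self,
      or_false, false_or, hkk] <;>
  · have hmx : ∀ x : ℤ, max (-x) 0 = max x 0 - x := fun x => by omega
    simp only [hmx, max_self]
    ring

lemma rowSel_mul_apply (k : ι) (M A : Matrix ι ι ℤ) (i j : ι) :
    (rowSel k M * A) i j = if i = k then (M * A) k j else 0 := by
  simp only [rowSel, Matrix.mul_apply, Matrix.of_apply, ite_mul, zero_mul]
  by_cases h : i = k <;> simp [h, Matrix.mul_apply]

lemma F_sq {k : ι} {M : Matrix ι ι ℤ} (hkk : M k k = 0) :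
    (Jmat k + rowSel k M) * (Jmat k + rowSel k M) = 1 := by
  ext i j
  rw [Matrix.add_mul]
  simp only [Matrix.add_apply, Jmat_mul_apply, rowSel_mul_apply, Matrix.mul_add,
    mul_Jmat_apply, mul_rowSel_apply]
  by_cases hi : i = k <;> by_cases hj : j = k <;>
    simp [hi, hj, Jmat, Matrix.diagonal_apply, Matrix.one_apply, rowSel, hkk] <;>
    (first
      | simp [show ¬ k = j from fun h => hj h.symm]
      | ring)

lemma E_transpose_D' {D : ι → ℚ} (hD : ∀ i, 0 < D i) {A : Matrix ι ι ℤ} (k : ι)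
    (hA : IsSkew D A) (hkk : A k k = 0) :
    ((Jmat k + colSel k (posPart (-A))).map (Int.cast : ℤ → ℚ))ᵀ * Matrix.diagonal D
      = Matrix.diagonal D * ((Jmat k + rowSel k (posPart A)).map (Int.cast : ℤ → ℚ)) := by
  ext i j
  rw [Matrix.mul_diagonal, Matrix.diagonal_mul, Matrix.transpose_apply]
  simp only [Matrix.map_apply, Matrix.add_apply, colSel, rowSel, posPart, Jmat,
    Matrix.of_apply, Matrix.neg_apply, Matrix.diagonal_apply]
  by_cases hik : i = k
  · subst hik
    by_cases hji : j = i
    · subst hji; simp [hkk]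
    · have hji' : ¬ i = j := fun h => hji h.symm
      simp only [hji, hji', if_false, if_true, eq_self_iff_true, zero_add, add_zero]
      push_cast
      have hs := hA j i
      have hDj := (hD j).le
      have hDi := (hD i).le
      rw [max_mul_of_nonneg _ _ hDj, mul_max_of_nonneg _ _ hDi]
      rw [zero_mul, mul_zero]
      congr 1
      linarith
  · by_cases hji : j = i
    · subst hji; simp [hik]
    · have hji' : ¬ i = j := fun h => hji h.symm
      simp [hik, hji, hji']


lemma pairfold_fst (w : List ι) : ∀ B C : Matrix ι ι ℤ,
    (w.foldl (fun p k => (mutate k p.1, Cstep p.1 p.2 k)) (B, C)).1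
      = w.foldl (fun B k => mutate k B) B := by
  induction w with
  | nil => intro B C; rfl
  | cons k w ih => intro B C; simpa using ih (mutate k B) (Cstep B C k)

lemma triplefold_fst (B0 : Matrix ι ι ℤ) (w : List ι) : ∀ B C G : Matrix ι ι ℤ,
    (w.foldl (fun p k => (mutate k p.1, Cstep p.1 p.2.1 k, Gstep B0 p.1 p.2.1 p.2.2 k))
      (B, C, G)).1 = w.foldl (fun B k => mutate k B) B := by
  induction w with
  | nil => intro B C G; rfl
  | cons k w ih => intro B C G; simpa using ih (mutate k B) (Cstep B C k) (Gstep B0 B C G k)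

lemma triplefold_snd (B0 : Matrix ι ι ℤ) (w : List ι) : ∀ B C G : Matrix ι ι ℤ,
    (w.foldl (fun p k => (mutate k p.1, Cstep p.1 p.2.1 k, Gstep B0 p.1 p.2.1 p.2.2 k))
      (B, C, G)).2.1
      = (w.foldl (fun p k => (mutate k p.1, Cstep p.1 p.2 k)) (B, C)).2 := by
  induction w with
  | nil => intro B C G; rfl
  | cons k w ih => intro B C G; simpa using ih (mutate k B) (Cstep B C k) (Gstep B0 B C G k)

lemma Bmat_concat (B0 : Matrix ι ι ℤ) (w : List ι) (k : ι) :
    Bmat B0 (w ++ [k]) = mutate k (Bmat B0 w) := by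
  simp [Bmat, List.foldl_append]

lemma Cmat_concat (B0 : Matrix ι ι ℤ) (w : List ι) (k : ι) :
    Cmat B0 (w ++ [k]) = Cstep (Bmat B0 w) (Cmat B0 w) k := by
  rw [Cmat, List.foldl_append]
  simp only [List.foldl_cons, List.foldl_nil]
  rw [pairfold_fst]
  rfl

lemma Gmat_concat (B0 : Matrix ι ι ℤ) (w : List ι) (k : ι) :
    Gmat B0 (w ++ [k]) = Gstep B0 (Bmat B0 w) (Cmat B0 w) (Gmat B0 w) k := by
  rw [Gmat, List.foldl_append]
  simp only [List.foldl_cons, List.foldl_nil]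
  rw [triplefold_fst, triplefold_snd]
  rfl


lemma map_mul' (M N : Matrix ι ι ℤ) :
    (M * N).map (Int.cast : ℤ → ℚ) = M.map (Int.cast : ℤ → ℚ) * N.map (Int.cast : ℤ → ℚ) := by
  ext i j
  simp [Matrix.mul_apply, Matrix.map_apply]

lemma map_one' : (1 : Matrix ι ι ℤ).map (Int.cast : ℤ → ℚ) = 1 := by
  ext i j
  simp [Matrix.map_apply, Matrix.one_apply, apply_ite]

lemma det_map' (M : Matrix ι ι ℤ) :
    (M.map (Int.cast : ℤ → ℚ)).det = ((M.det : ℤ) : ℚ) := by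
  have h := RingHom.map_det (Int.castRingHom ℚ) M
  simpa using h.symm

lemma key (B0 : Matrix ι ι ℤ) (D : ι → ℚ) (hD : ∀ i, 0 < D i)
    (hDB0 : IsSkew D B0)
    (hsc : ∀ w : List ι, ColSignCoherent (Cmat B0 w)) (w : List ι) :
    IsSkew D (Bmat B0 w) ∧ Gmat B0 w * Bmat B0 w = B0 * Cmat B0 w ∧
      ((Gmat B0 w).map (Int.cast : ℤ → ℚ))ᵀ * Matrix.diagonal D *
        ((Cmat B0 w).map (Int.cast : ℤ → ℚ)) = Matrix.diagonal D := by
  induction w using List.reverseRecOn with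
  | nil =>
    refine ⟨hDB0, ?_, ?_⟩
    · simp [Bmat, Cmat, Gmat]
    · simp [Cmat, Gmat, map_one']
  | append_singleton w k ih =>
    obtain ⟨hB, hGB, hdual⟩ := ih
    rw [Bmat_concat, Cmat_concat, Gmat_concat]
    set B := Bmat B0 w with hBdef
    set C := Cmat B0 w with hCdef
    set G := Gmat B0 w with hGdef
    have hkk : B k k = 0 := hB.diag_zero hD k
    have hsk' : IsSkew D (mutate k B) := hB.mutate hD k
    rcases hsc w k with ⟨-, hpos⟩ | ⟨-, hneg⟩
    · -- positive column k
      rw [Cstep_pos hpos, Gstep_pos hpos]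
      refine ⟨hsk', ?_, ?_⟩
      · rw [Matrix.mul_assoc, EB_pos hkk, ← Matrix.mul_assoc, hGB, Matrix.mul_assoc]
      · have hE := E_transpose_D' (D := D) hD k hB hkk
        have hppkk : posPart B k k = 0 := by simp [posPart, hkk]
        have hF2 : ((Jmat k + rowSel k (posPart B)).map (Int.cast : ℤ → ℚ)) *
            ((Jmat k + rowSel k (posPart B)).map (Int.cast : ℤ → ℚ)) = 1 := by
          rw [← map_mul', F_sq hppkk, map_one']
        rw [map_mul', map_mul', Matrix.transpose_mul]
        have hassoc :
            ((Jmat k + colSel k (posPart (-B))).map (Int.cast : ℤ → ℚ))ᵀ *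
              ((G.map (Int.cast : ℤ → ℚ))ᵀ) * Matrix.diagonal D *
              ((C.map (Int.cast : ℤ → ℚ)) *
                ((Jmat k + rowSel k (posPart B)).map (Int.cast : ℤ → ℚ))) =
            ((Jmat k + colSel k (posPart (-B))).map (Int.cast : ℤ → ℚ))ᵀ *
              ((G.map (Int.cast : ℤ → ℚ))ᵀ * Matrix.diagonal D *
                (C.map (Int.cast : ℤ → ℚ))) *
              ((Jmat k + rowSel k (posPart B)).map (Int.cast : ℤ → ℚ)) := by
          simp only [Matrix.mul_assoc]
        rw [hassoc, hdual, hE, Matrix.mul_assoc, hF2, Matrix.mul_one]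
    · -- negative column k
      rw [Cstep_neg hneg, Gstep_neg hneg hGB]
      refine ⟨hsk', ?_, ?_⟩
      · rw [Matrix.mul_assoc, EB_neg hkk, ← Matrix.mul_assoc, hGB, Matrix.mul_assoc]
      · have hE := E_transpose_D' (D := D) hD k hB.neg (by simp [hkk])
        rw [neg_neg] at hE
        have hppkk : posPart (-B) k k = 0 := by simp [posPart, hkk]
        have hF2 : ((Jmat k + rowSel k (posPart (-B))).map (Int.cast : ℤ → ℚ)) *
            ((Jmat k + rowSel k (posPart (-B))).map (Int.cast : ℤ → ℚ)) = 1 := by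
          rw [← map_mul', F_sq hppkk, map_one']
        rw [map_mul', map_mul', Matrix.transpose_mul]
        have hassoc :
            ((Jmat k + colSel k (posPart B)).map (Int.cast : ℤ → ℚ))ᵀ *
              ((G.map (Int.cast : ℤ → ℚ))ᵀ) * Matrix.diagonal D *
              ((C.map (Int.cast : ℤ → ℚ)) *
                ((Jmat k + rowSel k (posPart (-B))).map (Int.cast : ℤ → ℚ))) =
            ((Jmat k + colSel k (posPart B)).map (Int.cast : ℤ → ℚ))ᵀ *
              ((G.map (Int.cast : ℤ → ℚ))ᵀ * Matrix.diagonal D *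
                (C.map (Int.cast : ℤ → ℚ))) *
              ((Jmat k + rowSel k (posPart (-B))).map (Int.cast : ℤ → ℚ)) := by
          simp only [Matrix.mul_assoc]
        rw [hassoc, hdual, hE, Matrix.mul_assoc, hF2, Matrix.mul_one]

/-- **Unimodularity and second duality** under sign-coherence. -/
theorem unimodularity_and_second_duality (n : ℕ) (hn : 1 ≤ n)
    (B0 : Matrix (Fin n) (Fin n) ℤ) (D : Fin n → ℚ) (hD : ∀ i, 0 < D i)
    (hDB0 : ∀ i j, D i * (B0 i j : ℚ) = -(D j * (B0 j i : ℚ)))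
    (hsc : ∀ w : List (Fin n), ColSignCoherent (Cmat B0 w))
    (w : List (Fin n)) :
    ((Cmat B0 w).det = (Gmat B0 w).det ∧
      ((Cmat B0 w).det = 1 ∨ (Cmat B0 w).det = -1)) ∧
    (Matrix.diagonal D)⁻¹ * ((Gmat B0 w).map (Int.cast : ℤ → ℚ))ᵀ *
        Matrix.diagonal D * (Cmat B0 w).map (Int.cast : ℤ → ℚ) = 1 := by
  obtain ⟨-, -, hdual⟩ := key B0 D hD hDB0 hsc w
  have hdetD : (Matrix.diagonal D).det = ∏ i, D i := Matrix.det_diagonal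
  have hdetDne : (Matrix.diagonal D).det ≠ 0 := by
    rw [hdetD]
    exact (Finset.prod_pos fun i _ => hD i).ne'
  constructor
  · have h1 : ((Gmat B0 w).det : ℚ) * ((Cmat B0 w).det : ℚ) = 1 := by
      have h2 := congrArg Matrix.det hdual
      rw [Matrix.det_mul, Matrix.det_mul, Matrix.det_transpose, det_map', det_map'] at h2
      have h3 : (((Gmat B0 w).det : ℚ) * ((Cmat B0 w).det : ℚ)) * (Matrix.diagonal D).det
          = 1 * (Matrix.diagonal D).det := by rw [one_mul]; linear_combination h2
      exact mul_right_cancel₀ hdetDne h3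
    have h4 : (Gmat B0 w).det * (Cmat B0 w).det = 1 := by exact_mod_cast h1
    rcases Int.eq_one_or_neg_one_of_mul_eq_one' h4 with ⟨hg, hc⟩ | ⟨hg, hc⟩
    · exact ⟨by rw [hg, hc], Or.inl hc⟩
    · exact ⟨by rw [hg, hc], Or.inr hc⟩
  · have hassoc : (Matrix.diagonal D)⁻¹ * ((Gmat B0 w).map (Int.cast : ℤ → ℚ))ᵀ *
        Matrix.diagonal D * (Cmat B0 w).map (Int.cast : ℤ → ℚ)
        = (Matrix.diagonal D)⁻¹ * (((Gmat B0 w).map (Int.cast : ℤ → ℚ))ᵀ *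
          Matrix.diagonal D * (Cmat B0 w).map (Int.cast : ℤ → ℚ)) := by
      simp only [Matrix.mul_assoc]
    rw [hassoc, hdual, Matrix.nonsing_inv_mul _ (isUnit_iff_ne_zero.mpr hdetDne)]

end ClusterPattern
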